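/- Let i,j,k ∈ ℕ with i ≠ j and k ≠ j, and consider the state sequence ^{i,k}σ^j. If i < j and k < j, then ^{i,k}σ^j ⊨ G(p₁ ∨ G(p₂)); conversely, if i ≥ j or k ≥ j, then ^{i,k}σ^j ⊭ G(p₁ ∨ G(p₂)). -/

import Mathlib

/-- Syntax of LTL with Past (LTL+P) over proposition letters of type `α`. -/
inductive Formula (α : Type) : Type
  | atom  : α → Formula α                       -- proposition letter
  | not   : Formula α → Formula α               -- ¬
  | or    : Formula α → Formula α → Formula α   -- ∨
  | and   : Formula α → Formula α → Formula α   -- ∧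
  | next  : Formula α → Formula α               -- X
  | untl  : Formula α → Formula α → Formula α   -- U
  | rels  : Formula α → Formula α → Formula α   -- R
  | ev    : Formula α → Formula α               -- F
  | glob  : Formula α → Formula α               -- G
  | yest  : Formula α → Formula α               -- Y
  | wyest : Formula α → Formula α               -- Z
  | since : Formula α → Formula α → Formula α   -- S
  | trig  : Formula α → Formula α → Formula α   -- T
  | once  : Formula α → Formula α               -- O
  | hist  : Formula α → Formula α               -- H

namespace Formula

/-- Satisfaction `σ, i ⊨ φ` of an LTL+P formula by a state sequence
(an infinite word `σ : ℕ → Set α`) at position `i`. -/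
def Sat {α : Type} (σ : ℕ → Set α) : Formula α → ℕ → Prop
  | .atom p, i => p ∈ σ i
  | .not φ, i => ¬ Sat σ φ i
  | .or φ ψ, i => Sat σ φ i ∨ Sat σ ψ i
  | .and φ ψ, i => Sat σ φ i ∧ Sat σ ψ i
  | .next φ, i => Sat σ φ (i + 1)
  | .untl φ ψ, i => ∃ j, i ≤ j ∧ Sat σ ψ j ∧ ∀ k, i ≤ k → k < j → Sat σ φ k
  | .rels φ ψ, i => (∀ j, i ≤ j → Sat σ ψ j) ∨
      (∃ n, i ≤ n ∧ Sat σ φ n ∧ ∀ m, i ≤ m → m ≤ n → Sat σ ψ m)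
  | .ev φ, i => ∃ j, i ≤ j ∧ Sat σ φ j
  | .glob φ, i => ∀ j, i ≤ j → Sat σ φ j
  | .yest φ, i => 0 < i ∧ Sat σ φ (i - 1)
  | .wyest φ, i => i = 0 ∨ Sat σ φ (i - 1)
  | .since φ ψ, i => ∃ j, j ≤ i ∧ Sat σ ψ j ∧ ∀ k, j < k → k ≤ i → Sat σ φ k
  | .trig φ ψ, i => (∀ j, j ≤ i → Sat σ ψ j) ∨
      (∃ n, n ≤ i ∧ Sat σ φ n ∧ ∀ m, n ≤ m → m ≤ i → Sat σ ψ m)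
  | .once φ, i => ∃ j, j ≤ i ∧ Sat σ φ j
  | .hist φ, i => ∀ j, j ≤ i → Sat σ φ j

/-- The ω-language of a formula: the set of state sequences satisfying it at position 0. -/
def Lang {α : Type} (φ : Formula α) : Set (ℕ → Set α) := {σ | Sat σ φ 0}

end Formula

open Formula

/-- `σ_{[0,i]} · σ'` : the infinite word whose first `i+1` letters come from `σ`
and which then continues as `σ'`. -/
def extendPrefix {α : Type} (σ : ℕ → Set α) (i : ℕ) (σ' : ℕ → Set α) : ℕ → Set α :=
  fun n => if n ≤ i then σ n else σ' (n - (i + 1))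

/-- `L` is a safety ω-language: every word not in `L` has a finite prefix all of whose
infinite extensions are not in `L`. -/
def IsSafety {α : Type} (L : Set (ℕ → Set α)) : Prop :=
  ∀ σ : ℕ → Set α, σ ∉ L → ∃ i : ℕ, ∀ σ' : ℕ → Set α, extendPrefix σ i σ' ∉ L

/-- `X^n φ`. -/
def nextPow {α : Type} : ℕ → Formula α → Formula α
  | 0, φ => φ
  | n + 1, φ => .next (nextPow n φ)

/-- `⋀_{j=0}^{n} X^j φ`. -/
def nextChain {α : Type} (φ : Formula α) : ℕ → Formula α
  | 0 => φ
  | n + 1 => .and (nextChain φ n) (nextPow (n + 1) φ)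

/-- The `i`-th disjunct of the bounded until: `X^i ψ₂ ∧ ⋀_{j=0}^{i-1} X^j ψ₁`. -/
def buntilTerm {α : Type} (ψ₁ ψ₂ : Formula α) : ℕ → Formula α
  | 0 => ψ₂
  | n + 1 => .and (nextPow (n + 1) ψ₂) (nextChain ψ₁ n)

/-- Bounded until `ψ₁ U^[a,b] ψ₂ = ⋁_{i=a}^{b} (X^i ψ₂ ∧ ⋀_{j=0}^{i-1} X^j ψ₁)`. -/
def buntil {α : Type} (a b : ℕ) (ψ₁ ψ₂ : Formula α) : Formula α :=
  ((List.range' (a + 1) (b - a)).map (buntilTerm ψ₁ ψ₂)).foldl .or (buntilTerm ψ₁ ψ₂ a)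

/-- Pure past layer of LTLEBR+P : `η ::= p | ¬η | η∨η | Yη | ηSη`. -/
inductive PurePastL {α : Type} : Formula α → Prop
  | atom (p : α) : PurePastL (.atom p)
  | not {φ} : PurePastL φ → PurePastL (.not φ)
  | or {φ ψ} : PurePastL φ → PurePastL ψ → PurePastL (.or φ ψ)
  | yest {φ} : PurePastL φ → PurePastL (.yest φ)
  | since {φ ψ} : PurePastL φ → PurePastL ψ → PurePastL (.since φ ψ)

/-- Bounded future layer over a base: `ψ ::= base | ¬ψ | ψ∨ψ | Xψ | ψ U^[a,b] ψ`. -/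
inductive BFLayer {α : Type} (base : Formula α → Prop) : Formula α → Prop
  | base {φ} : base φ → BFLayer base φ
  | not {φ} : BFLayer base φ → BFLayer base (.not φ)
  | or {φ ψ} : BFLayer base φ → BFLayer base ψ → BFLayer base (.or φ ψ)
  | next {φ} : BFLayer base φ → BFLayer base (.next φ)
  | bu (a b : ℕ) {φ ψ} : BFLayer base φ → BFLayer base ψ → BFLayer base (buntil a b φ ψ)

/-- Future layer: `φ ::= ψ | φ∧φ | Xφ | Gφ | ψRφ`. -/
inductive FLayer {α : Type} (base : Formula α → Prop) : Formula α → Prop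
  | bf {φ} : BFLayer base φ → FLayer base φ
  | and {φ ψ} : FLayer base φ → FLayer base ψ → FLayer base (.and φ ψ)
  | next {φ} : FLayer base φ → FLayer base (.next φ)
  | glob {φ} : FLayer base φ → FLayer base (.glob φ)
  | rels {φ ψ} : BFLayer base φ → FLayer base ψ → FLayer base (.rels φ ψ)

/-- Boolean layer: `χ ::= φ | χ∨χ | χ∧χ`. -/
inductive BLayer {α : Type} (base : Formula α → Prop) : Formula α → Prop
  | f {φ} : FLayer base φ → BLayer base φ
  | or {φ ψ} : BLayer base φ → BLayer base ψ → BLayer base (.or φ ψ)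
  | and {φ ψ} : BLayer base φ → BLayer base ψ → BLayer base (.and φ ψ)

/-- LTLEBR+P formulas: layered grammar whose innermost layer is the pure past layer. -/
def IsLTLEBRP {α : Type} (φ : Formula α) : Prop := BLayer PurePastL φ

/-- LTLEBR formulas: LTLEBR+P without the pure past layer
(the bounded future layer starts from proposition letters). -/
def IsLTLEBR {α : Type} (φ : Formula α) : Prop :=
  BLayer (fun ψ => ∃ p, ψ = Formula.atom p) φ

/-- Formulas with no past operators (pure future LTL). -/
def FutureOnly {α : Type} : Formula α → Prop
  | .atom _ => True
  | .not φ => FutureOnly φ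
  | .or φ ψ => FutureOnly φ ∧ FutureOnly ψ
  | .and φ ψ => FutureOnly φ ∧ FutureOnly ψ
  | .next φ => FutureOnly φ
  | .untl φ ψ => FutureOnly φ ∧ FutureOnly ψ
  | .rels φ ψ => FutureOnly φ ∧ FutureOnly ψ
  | .ev φ => FutureOnly φ
  | .glob φ => FutureOnly φ
  | .yest _ => False
  | .wyest _ => False
  | .since _ _ => False
  | .trig _ _ => False
  | .once _ => False
  | .hist _ => False

/-- Negated normal form: `nnf b φ` is the NNF of `φ` if `b = false`, of `¬φ` if `b = true`. -/
def nnf {α : Type} : Bool → Formula α → Formula α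
  | false, .atom p => .atom p
  | true, .atom p => .not (.atom p)
  | b, .not φ => nnf (!b) φ
  | false, .or φ ψ => .or (nnf false φ) (nnf false ψ)
  | true, .or φ ψ => .and (nnf true φ) (nnf true ψ)
  | false, .and φ ψ => .and (nnf false φ) (nnf false ψ)
  | true, .and φ ψ => .or (nnf true φ) (nnf true ψ)
  | b, .next φ => .next (nnf b φ)
  | false, .untl φ ψ => .untl (nnf false φ) (nnf false ψ)
  | true, .untl φ ψ => .rels (nnf true φ) (nnf true ψ)
  | false, .rels φ ψ => .rels (nnf false φ) (nnf false ψ)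
  | true, .rels φ ψ => .untl (nnf true φ) (nnf true ψ)
  | false, .ev φ => .ev (nnf false φ)
  | true, .ev φ => .glob (nnf true φ)
  | false, .glob φ => .glob (nnf false φ)
  | true, .glob φ => .ev (nnf true φ)
  | false, .yest φ => .yest (nnf false φ)
  | true, .yest φ => .wyest (nnf true φ)
  | false, .wyest φ => .wyest (nnf false φ)
  | true, .wyest φ => .yest (nnf true φ)
  | false, .since φ ψ => .since (nnf false φ) (nnf false ψ)
  | true, .since φ ψ => .trig (nnf true φ) (nnf true ψ)
  | false, .trig φ ψ => .trig (nnf false φ) (nnf false ψ)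
  | true, .trig φ ψ => .since (nnf true φ) (nnf true ψ)
  | false, .once φ => .once (nnf false φ)
  | true, .once φ => .hist (nnf true φ)
  | false, .hist φ => .hist (nnf false φ)
  | true, .hist φ => .once (nnf true φ)

/-- The formula contains no until (`U`) and no eventually (`F`) operator. -/
def NoUF {α : Type} : Formula α → Prop
  | .atom _ => True
  | .not φ => NoUF φ
  | .or φ ψ => NoUF φ ∧ NoUF ψ
  | .and φ ψ => NoUF φ ∧ NoUF ψ
  | .next φ => NoUF φ
  | .untl _ _ => False
  | .rels φ ψ => NoUF φ ∧ NoUF ψ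
  | .ev _ => False
  | .glob φ => NoUF φ
  | .yest φ => NoUF φ
  | .wyest φ => NoUF φ
  | .since φ ψ => NoUF φ ∧ NoUF ψ
  | .trig φ ψ => NoUF φ ∧ NoUF ψ
  | .once φ => NoUF φ
  | .hist φ => NoUF φ

/-- safetyLTL: pure-future LTL formulas whose negated normal form
contains no `U` and no `F`. -/
def IsSafetyLTL {α : Type} (φ : Formula α) : Prop :=
  FutureOnly φ ∧ NoUF (nnf false φ)

/-- LTLBP (bounded past LTL): Boolean combinations of proposition letters
and yesterday operators. -/
inductive IsLTLBP {α : Type} : Formula α → Prop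
  | atom (p : α) : IsLTLBP (.atom p)
  | not {φ} : IsLTLBP φ → IsLTLBP (.not φ)
  | or {φ ψ} : IsLTLBP φ → IsLTLBP ψ → IsLTLBP (.or φ ψ)
  | and {φ ψ} : IsLTLBP φ → IsLTLBP ψ → IsLTLBP (.and φ ψ)
  | yest {φ} : IsLTLBP φ → IsLTLBP (.yest φ)

/-- Temporal depth `D` of an LTLBP formula. -/
def depth {α : Type} : Formula α → ℕ
  | .not φ => depth φ
  | .or φ ψ => max (depth φ) (depth ψ)
  | .and φ ψ => max (depth φ) (depth ψ)
  | .yest φ => depth φ + 1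
  | _ => 0

/-- canLTLEBR: the canonical form of LTLEBR, i.e. `∧/∨`-combinations of formulas
`X^n α`, `X^n G α`, `X^n (α R β)` with `α, β` LTLBP formulas. -/
inductive IsCanLTLEBR {α : Type} : Formula α → Prop
  | bp {φ} (n : ℕ) : IsLTLBP φ → IsCanLTLEBR (nextPow n φ)
  | glob {φ} (n : ℕ) : IsLTLBP φ → IsCanLTLEBR (nextPow n (.glob φ))
  | rels {φ ψ} (n : ℕ) : IsLTLBP φ → IsLTLBP ψ → IsCanLTLEBR (nextPow n (.rels φ ψ))
  | and {φ ψ} : IsCanLTLEBR φ → IsCanLTLEBR ψ → IsCanLTLEBR (.and φ ψ)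
  | or {φ ψ} : IsCanLTLEBR φ → IsCanLTLEBR ψ → IsCanLTLEBR (.or φ ψ)

/-- Maximum number of nested next (`X`) operators (for canonical-form formulas). -/
def nextDepth {α : Type} : Formula α → ℕ
  | .next φ => nextDepth φ + 1
  | .not φ => nextDepth φ
  | .or φ ψ => max (nextDepth φ) (nextDepth ψ)
  | .and φ ψ => max (nextDepth φ) (nextDepth ψ)
  | .glob φ => nextDepth φ
  | .rels φ ψ => max (nextDepth φ) (nextDepth ψ)
  | .yest φ => nextDepth φ
  | _ => 0

/-- Maximum temporal depth among LTLBP subformulas (for canonical-form formulas). -/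
def bpDepth {α : Type} : Formula α → ℕ
  | .next φ => bpDepth φ
  | .glob φ => depth φ
  | .rels φ ψ => max (depth φ) (depth ψ)
  | .and φ ψ => max (bpDepth φ) (bpDepth ψ)
  | .or φ ψ => max (bpDepth φ) (bpDepth ψ)
  | φ => depth φ

/-- The interval `σ_{[n-d, n]}` of `σ`, as a finite word: it starts at
`max (n-d) 0` and ends at `n`. -/
def window {α : Type} (σ : ℕ → Set α) (d n : ℕ) : List (Set α) :=
  (List.range (min d n + 1)).map (fun t => σ (n - min d n + t))

/-- A pure past formula: all of its temporal operators are past operators. -/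
def IsPurePast {α : Type} : Formula α → Prop
  | .atom _ => True
  | .not φ => IsPurePast φ
  | .or φ ψ => IsPurePast φ ∧ IsPurePast ψ
  | .and φ ψ => IsPurePast φ ∧ IsPurePast ψ
  | .next _ => False
  | .untl _ _ => False
  | .rels _ _ => False
  | .ev _ => False
  | .glob _ => False
  | .yest φ => IsPurePast φ
  | .wyest φ => IsPurePast φ
  | .since φ ψ => IsPurePast φ ∧ IsPurePast ψ
  | .trig φ ψ => IsPurePast φ ∧ IsPurePast ψ
  | .once φ => IsPurePast φ
  | .hist φ => IsPurePast φ

/-- The two-letter alphabet Σ = {p₁, p₂}. -/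
inductive PP : Type
  | p1 : PP
  | p2 : PP
deriving DecidableEq

/-- The state sequence `^{i,k}σ^j`: its `h`-th state is `{p₁}` if `h ∈ {i,k}`,
`{p₂}` if `h = j`, and `{p₁,p₂}` otherwise. -/
def sig (i k j : ℕ) : ℕ → Set PP := fun h =>
  if h = i ∨ h = k then {PP.p1} else if h = j then {PP.p2} else {PP.p1, PP.p2}

/-- The formula `G (p₁ ∨ G p₂)`. -/
def phiG : Formula PP :=
  .glob (.or (.atom PP.p1) (.glob (.atom PP.p2)))

theorem sat_phiG_iff (σ : ℕ → Set PP) :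
    Sat σ phiG 0 ↔ ∀ n, PP.p1 ∈ σ n ∨ ∀ m, n ≤ m → PP.p2 ∈ σ m := by
  simp only [phiG, Sat, Nat.zero_le, true_implies]

theorem p1_mem_sig_iff (i k j h : ℕ) : PP.p1 ∈ sig i k j h ↔ h = i ∨ h = k ∨ h ≠ j := by
  unfold sig
  split_ifs <;> simp <;> omega

theorem p2_mem_sig_iff (i k j h : ℕ) : PP.p2 ∈ sig i k j h ↔ h ≠ i ∧ h ≠ k := by
  unfold sig
  split_ifs <;> simp <;> omega

/-- The only position without `p₁` is `j`, so the formula holds iff `p₂` holds from `j` on,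
i.e. iff both `p₂`-free positions `i` and `k` precede `j`. -/
theorem sat_sig_phiG_iff {i j k : ℕ} (hij : i ≠ j) (hkj : k ≠ j) :
    Sat (sig i k j) phiG 0 ↔ i < j ∧ k < j := by
  simp only [sat_phiG_iff, p1_mem_sig_iff, p2_mem_sig_iff]
  constructor
  · intro h
    rcases h j with (rfl | rfl | hjj) | hp2
    · exact absurd rfl hij
    · exact absurd rfl hkj
    · exact absurd rfl hjj
    · by_contra hlt
      rcases not_and_or.mp hlt with hi | hk
      · exact (hp2 i (not_lt.mp hi)).1 rfl
      · exact (hp2 k (not_lt.mp hk)).2 rfl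
  · rintro ⟨hi, hk⟩ n
    by_cases hn : n = j
    · exact Or.inr fun m hm => ⟨by omega, by omega⟩
    · exact Or.inl (Or.inr (Or.inr hn))

/-- membership of `^{i,k}σ^j` in `L(G(p₁ ∨ G p₂))` according to
the values of `i`, `j`, `k`. -/
theorem sig_phiG_membership (i j k : ℕ) (hij : i ≠ j) (hkj : k ≠ j) :
    ((i < j ∧ k < j) → Sat (sig i k j) phiG 0) ∧
    ((j ≤ i ∨ j ≤ k) → ¬ Sat (sig i k j) phiG 0) := by
  rw [sat_sig_phiG_iff hij hkj]
  exact ⟨id, fun h ⟨hi, hk⟩ => by omega⟩
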